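/- arXiv:2508.03821 — 10 statements merged into one kernel-verified Lean document; each statement's English description precedes it below -/
import Mathlib

section
/- Let H, M_l, M_g be N×N complex matrices with H Hermitian and M_l, M_g Hermitian, and suppose Z is an N×N complex matrix satisfying the Sylvester equation Z⬝X + Xᴴ⬝Z + 2•(M_gᵀ − M_l) = 0, where X := −i•H + M_l + M_gᵀ. Define the 2N×2N matrices S := (1/√2)•fromBlocks(1, 1, 1+Z, Z−1) and Sinv := (1/√2)•fromBlocks(1−Z, 1, 1+Z, −1), and L_eff := fromBlocks(−i•H − M_l + M_gᵀ, 2•M_gᵀ, 2•M_l, −i•H + M_l − M_gᵀ). Then S⬝Sinv = 1, Sinv⬝S = 1, and S⬝L_eff⬝Sinv = fromBlocks(X, 0, 0, −Xᴴ). -/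
/-!
Write `K = -i H`, `P = M_l`, `Q = M_gᵀ`, so that `X = K + P + Q` and, by hermiticity,
`Xᴴ = -K + P + Q`. Without the factors `1/√2`, the two block matrices multiply to `2`
in either order, and conjugating `L_eff` gives twice `fromBlocks X 0 0 (-Xᴴ)` except in the
lower-left block, which is twice the left-hand side of the Sylvester equation. All of this
is a polynomial identity in `K, P, Q, Z`, valid in any matrix ring.
-/

open Matrix

section Shear

variable {n R : Type*} [Fintype n] [CommRing R]

theorem smul_mul_smul_eq_of_mul_eq_two_smul {c : R} (hc : 2 * (c * c) = 1)
    {A B C : Matrix n n R} (h : A * B = (2 : R) • C) : c • A * c • B = C := by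
  rw [smul_mul_smul_comm, h, smul_smul, mul_comm, hc, one_smul]

variable [DecidableEq n]

def sylvesterShear (Z : Matrix n n R) : Matrix (n ⊕ n) (n ⊕ n) R :=
  fromBlocks 1 1 (1 + Z) (Z - 1)

def sylvesterShear' (Z : Matrix n n R) : Matrix (n ⊕ n) (n ⊕ n) R :=
  fromBlocks (1 - Z) 1 (1 + Z) (-1)

theorem sylvesterShear_mul_sylvesterShear' (Z : Matrix n n R) :
    sylvesterShear Z * sylvesterShear' Z = (2 : R) • 1 := by
  rw [sylvesterShear, sylvesterShear', fromBlocks_multiply, ← fromBlocks_one, fromBlocks_smul,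
    fromBlocks_inj, smul_zero, two_smul]
  refine ⟨?_, ?_, ?_, ?_⟩ <;> noncomm_ring

theorem sylvesterShear'_mul_sylvesterShear (Z : Matrix n n R) :
    sylvesterShear' Z * sylvesterShear Z = (2 : R) • 1 := by
  rw [sylvesterShear, sylvesterShear', fromBlocks_multiply, ← fromBlocks_one, fromBlocks_smul,
    fromBlocks_inj, smul_zero, two_smul]
  refine ⟨?_, ?_, ?_, ?_⟩ <;> noncomm_ring

theorem sylvesterShear_mul_fromBlocks_mul_sylvesterShear' {K P Q Z : Matrix n n R}
    (hZ : Z * (K + P + Q) + (-K + P + Q) * Z + (2 : R) • (Q - P) = 0) :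
    sylvesterShear Z * fromBlocks (K - P + Q) ((2 : R) • Q) ((2 : R) • P) (K + P - Q) *
        sylvesterShear' Z = (2 : R) • fromBlocks (K + P + Q) 0 0 (-(-K + P + Q)) := by
  rw [sylvesterShear, sylvesterShear', fromBlocks_multiply, fromBlocks_multiply, fromBlocks_smul,
    fromBlocks_inj, smul_zero]
  simp only [two_smul] at hZ ⊢
  refine ⟨by noncomm_ring, by noncomm_ring, ?_, by noncomm_ring⟩
  -- the lower-left block is `E + E`, where `E` is the left-hand side of `hZ`
  rw [← add_zero 0, ← hZ]
  noncomm_ring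

end Shear

theorem conjTranspose_neg_I_smul_add_add {n : Type*} {H P Q : Matrix n n ℂ}
    (hH : H.IsHermitian) (hP : P.IsHermitian) (hQ : Q.IsHermitian) :
    ((-Complex.I) • H + P + Q)ᴴ = -((-Complex.I) • H) + P + Q := by
  simp [hH.eq, hP.eq, hQ.eq]

theorem stmt_0 {N : ℕ} (H Ml Mg Z : Matrix (Fin N) (Fin N) ℂ)
    (hH : H.IsHermitian) (hMl : Ml.IsHermitian) (hMg : Mg.IsHermitian)
    (X : Matrix (Fin N) (Fin N) ℂ)
    (hX : X = (-Complex.I) • H + Ml + Mgᵀ)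
    (hZ : Z * X + Xᴴ * Z + (2 : ℂ) • (Mgᵀ - Ml) = 0)
    (S Sinv Leff : Matrix (Fin N ⊕ Fin N) (Fin N ⊕ Fin N) ℂ)
    (hS : S = ((1 / Real.sqrt 2 : ℝ) : ℂ) • fromBlocks 1 1 (1 + Z) (Z - 1))
    (hSinv : Sinv = ((1 / Real.sqrt 2 : ℝ) : ℂ) • fromBlocks (1 - Z) 1 (1 + Z) (-1))
    (hLeff : Leff = fromBlocks ((-Complex.I) • H - Ml + Mgᵀ) ((2 : ℂ) • Mgᵀ)
      ((2 : ℂ) • Ml) ((-Complex.I) • H + Ml - Mgᵀ)) :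
    S * Sinv = 1 ∧ Sinv * S = 1 ∧ S * Leff * Sinv = fromBlocks X 0 0 (-Xᴴ) := by
  have hc : 2 * (((1 / Real.sqrt 2 : ℝ) : ℂ) * ((1 / Real.sqrt 2 : ℝ) : ℂ)) = 1 := by
    rw [← Complex.ofReal_mul, div_mul_div_comm, one_mul, Real.mul_self_sqrt zero_le_two]
    norm_num
  have hXH : Xᴴ = -((-Complex.I) • H) + Ml + Mgᵀ := by
    rw [hX, conjTranspose_neg_I_smul_add_add hH hMl hMg.transpose]
  rw [hXH] at hZ ⊢
  subst hX hS hSinv hLeff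
  refine ⟨smul_mul_smul_eq_of_mul_eq_two_smul hc (sylvesterShear_mul_sylvesterShear' Z),
    smul_mul_smul_eq_of_mul_eq_two_smul hc (sylvesterShear'_mul_sylvesterShear Z), ?_⟩
  rw [smul_mul_assoc]
  exact smul_mul_smul_eq_of_mul_eq_two_smul hc
    (sylvesterShear_mul_fromBlocks_mul_sylvesterShear' hZ)
end

section
/- Let H, M_l, M_g be N×N complex matrices with H Hermitian and M_l, M_g positive semidefinite Hermitian, set X := −i•H + M_l + M_gᵀ and L_eff := fromBlocks(−i•H − M_l + M_gᵀ, 2•M_gᵀ, 2•M_l, −i•H + M_l − M_gᵀ), and suppose Z satisfies the Sylvester equation Z⬝X + Xᴴ⬝Z + 2•(M_gᵀ − M_l) = 0. If there is Δ > 0 such that every eigenvalue μ ∈ spectrum ℂ L_eff satisfies |Re μ| ≥ Δ, then every eigenvalue μ ∈ spectrum ℂ X satisfies Re μ ≥ Δ. -/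
/-!
The eigenvalues of `X` lie in the closed right half-plane, since `X + Xᴴ = 2 (M_l + M_gᵀ)` is
positive semidefinite. Moreover `L_eff = fromBlocks (-Xᴴ + 2 M_gᵀ) (2 M_gᵀ) (2 M_l) (-Xᴴ + 2 M_l)`,
so an eigenvector `u` of `Xᴴ` with eigenvalue `conj μ` yields the eigenvector `(u, -u)` of `L_eff`
with eigenvalue `-conj μ`. The gap condition at `-conj μ` then reads `Δ ≤ |Re μ| = Re μ`.
-/

open Matrix ComplexOrder

theorem Matrix.mem_spectrum_iff_exists_mulVec_eq_smul {K n : Type*} [Field K] [Fintype n]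
    [DecidableEq n] {A : Matrix n n K} {μ : K} :
    μ ∈ spectrum K A ↔ ∃ v ≠ 0, A *ᵥ v = μ • v := by
  rw [← spectrum_toLin', ← Module.End.hasEigenvalue_iff_mem_spectrum]
  constructor
  · intro h
    obtain ⟨v, hv⟩ := h.exists_hasEigenvector
    exact ⟨v, hv.2, by simpa using hv.apply_eq_smul⟩
  · rintro ⟨v, hv0, hv⟩
    exact Module.End.hasEigenvalue_of_hasEigenvector
      ⟨Module.End.mem_eigenspace_iff.2 (by simpa using hv), hv0⟩

theorem Matrix.re_nonneg_of_mem_spectrum {n : Type*} [Fintype n] [DecidableEq n]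
    {A : Matrix n n ℂ} (hA : (A + Aᴴ).PosSemidef) {μ : ℂ} (hμ : μ ∈ spectrum ℂ A) :
    0 ≤ μ.re := by
  obtain ⟨v, hv0, hv⟩ := mem_spectrum_iff_exists_mulVec_eq_smul.1 hμ
  have hquad : star v ⬝ᵥ (A + Aᴴ) *ᵥ v = (2 * μ.re : ℝ) * (star v ⬝ᵥ v) := by
    rw [add_mulVec, dotProduct_add, dotProduct_mulVec _ Aᴴ, ← star_mulVec, hv, star_smul,
      dotProduct_smul, smul_dotProduct, smul_eq_mul, smul_eq_mul, ← add_mul, Complex.star_def,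
      Complex.add_conj]
  have hnorm : 0 < (star v ⬝ᵥ v).re := (Complex.lt_def.1 (dotProduct_star_self_pos_iff.2 hv0)).1
  have hquad_nonneg := (Complex.le_def.1 (hA.dotProduct_mulVec_nonneg v)).1
  rw [hquad, Complex.re_ofReal_mul, Complex.zero_re] at hquad_nonneg
  linarith [nonneg_of_mul_nonneg_left hquad_nonneg hnorm]

theorem Matrix.fromBlocks_mulVec_sum_elim_neg {m R : Type*} [Fintype m] [CommRing R]
    (Y C D : Matrix m m R) {ν : R} {u : m → R} (hu : Y *ᵥ u = ν • u) :
    fromBlocks (-Y + C) C D (-Y + D) *ᵥ Sum.elim u (-u) = (-ν) • Sum.elim u (-u) := by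
  rw [fromBlocks_mulVec]
  simp only [Sum.elim_comp_inl, Sum.elim_comp_inr, add_mulVec, neg_mulVec, mulVec_neg, hu]
  ext (i | i) <;> simp

theorem Matrix.neg_mem_spectrum_fromBlocks {m K : Type*} [Fintype m] [DecidableEq m] [Field K]
    (Y C D : Matrix m m K) {ν : K} (hν : ν ∈ spectrum K Y) :
    -ν ∈ spectrum K (fromBlocks (-Y + C) C D (-Y + D)) := by
  obtain ⟨u, hu0, hu⟩ := mem_spectrum_iff_exists_mulVec_eq_smul.1 hν
  refine mem_spectrum_iff_exists_mulVec_eq_smul.2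
    ⟨Sum.elim u (-u), fun h => hu0 ?_, fromBlocks_mulVec_sum_elim_neg Y C D hu⟩
  simpa using congrArg (· ∘ Sum.inl) h

theorem stmt_2_general {N : ℕ} (H Ml Mg : Matrix (Fin N) (Fin N) ℂ)
    (hH : H.IsHermitian) (hMl : Ml.PosSemidef) (hMg : Mg.PosSemidef)
    (X : Matrix (Fin N) (Fin N) ℂ)
    (hX : X = (-Complex.I) • H + Ml + Mgᵀ)
    (Leff : Matrix (Fin N ⊕ Fin N) (Fin N ⊕ Fin N) ℂ)
    (hLeff : Leff = fromBlocks ((-Complex.I) • H - Ml + Mgᵀ) ((2 : ℂ) • Mgᵀ)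
      ((2 : ℂ) • Ml) ((-Complex.I) • H + Ml - Mgᵀ))
    (Δ : ℝ)
    (hgap : ∀ μ ∈ spectrum ℂ Leff, Δ ≤ |μ.re|) :
    ∀ μ ∈ spectrum ℂ X, Δ ≤ μ.re := by
  intro μ hμ
  have hXH : Xᴴ = Complex.I • H + Ml + Mgᵀ := by
    simp [hX, conjTranspose_add, conjTranspose_smul, hH.eq, hMl.1.eq, hMg.transpose.1.eq]
  have hX_add : (X + Xᴴ).PosSemidef := by
    have : X + Xᴴ = (2 : ℂ) • (Ml + Mgᵀ) := by rw [hXH, hX]; module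
    rw [this]
    exact (hMl.add hMg.transpose).smul (by norm_num)
  have hLeff' : Leff = fromBlocks (-Xᴴ + (2 : ℂ) • Mgᵀ) ((2 : ℂ) • Mgᵀ)
      ((2 : ℂ) • Ml) (-Xᴴ + (2 : ℂ) • Ml) := by
    rw [hLeff, hXH]
    congr 1 <;> module
  have hconj : star μ ∈ spectrum ℂ Xᴴ := by
    rw [← star_eq_conjTranspose, spectrum.map_star]
    simpa using hμ
  have hgap_μ := hgap _ (hLeff' ▸ neg_mem_spectrum_fromBlocks _ _ _ hconj)
  rwa [Complex.neg_re, Complex.star_def, Complex.conj_re, abs_neg,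
    abs_of_nonneg (re_nonneg_of_mem_spectrum hX_add hμ)] at hgap_μ

theorem stmt_2 {N : ℕ} (H Ml Mg Z : Matrix (Fin N) (Fin N) ℂ)
    (hH : H.IsHermitian) (hMl : Ml.PosSemidef) (hMg : Mg.PosSemidef)
    (X : Matrix (Fin N) (Fin N) ℂ)
    (hX : X = (-Complex.I) • H + Ml + Mgᵀ)
    (Leff : Matrix (Fin N ⊕ Fin N) (Fin N ⊕ Fin N) ℂ)
    (hLeff : Leff = fromBlocks ((-Complex.I) • H - Ml + Mgᵀ) ((2 : ℂ) • Mgᵀ)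
      ((2 : ℂ) • Ml) ((-Complex.I) • H + Ml - Mgᵀ))
    (hZ : Z * X + Xᴴ * Z + (2 : ℂ) • (Mgᵀ - Ml) = 0)
    (Δ : ℝ) (hΔ : 0 < Δ)
    (hgap : ∀ μ ∈ spectrum ℂ Leff, Δ ≤ |μ.re|) :
    ∀ μ ∈ spectrum ℂ X, Δ ≤ μ.re :=
  stmt_2_general H Ml Mg hH hMl hMg X hX Leff hLeff Δ hgap
end

section
/- Let X be an N×N complex matrix all of whose eigenvalues have strictly positive real part, and let C be an N×N Hermitian matrix. Then there exists a unique N×N complex matrix Z satisfying Z⬝X + Xᴴ⬝Z = C, and this Z is Hermitian. -/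
/-!
Sylvester's theorem: if `Z * A = B * Z` then `Z * p(A) = p(B) * Z` for every polynomial `p`;
taking `p` to be the characteristic polynomial of `A` gives `p(B) * Z = 0`, and `p(B)` is
invertible when `A` and `B` have no common eigenvalue, since by spectral mapping its
eigenvalues are the values of `p` on the eigenvalues of `B`. For `B = -Xᴴ` the eigenvalues are
the `-conj μ` with `μ` an eigenvalue of `X`, which have negative real part. Hence
`Z ↦ Z * X + Xᴴ * Z` is injective, so bijective, and it commutes with `ᴴ`, so the solution for
a Hermitian right-hand side is Hermitian.
-/

open Matrix Polynomial

namespace Matrix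

variable {m n R K : Type*} [Fintype m] [Fintype n] [DecidableEq m] [DecidableEq n]

theorem mul_pow_eq_pow_mul_of_mul_eq [Semiring R] {A : Matrix n n R} {B : Matrix m m R}
    {Z : Matrix m n R} (h : Z * A = B * Z) (k : ℕ) : Z * A ^ k = B ^ k * Z := by
  induction k with
  | zero => simp
  | succ k ih => rw [pow_succ, pow_succ, ← Matrix.mul_assoc, ih, Matrix.mul_assoc, h,
      Matrix.mul_assoc]

theorem mul_aeval_eq_aeval_mul_of_mul_eq [CommSemiring R] {A : Matrix n n R}
    {B : Matrix m m R} {Z : Matrix m n R} (h : Z * A = B * Z) (p : R[X]) :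
    Z * aeval A p = aeval B p * Z := by
  induction p using Polynomial.induction_on' with
  | add p q hp hq => rw [map_add, map_add, Matrix.mul_add, Matrix.add_mul, hp, hq]
  | monomial k a =>
    rw [aeval_monomial, aeval_monomial, ← Algebra.smul_def, ← Algebra.smul_def,
      Matrix.mul_smul, Matrix.smul_mul, mul_pow_eq_pow_mul_of_mul_eq h]

theorem eq_zero_of_mul_eq_mul_of_disjoint_spectrum [Field K] [IsAlgClosed K]
    {A : Matrix n n K} {B : Matrix m m K} (hAB : Disjoint (spectrum K A) (spectrum K B))
    {Z : Matrix m n K} (h : Z * A = B * Z) : Z = 0 := by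
  cases isEmpty_or_nonempty m
  · exact Subsingleton.elim _ _
  have hZ : aeval B A.charpoly * Z = 0 := by
    rw [← mul_aeval_eq_aeval_mul_of_mul_eq h, aeval_self_charpoly, Matrix.mul_zero]
  have hunit : IsUnit (aeval B A.charpoly) := by
    by_contra hnot
    have h0 := (spectrum.zero_mem_iff K).2 hnot
    rw [spectrum.map_polynomial_aeval_of_nonempty _ _
      (spectrum.nonempty_of_isAlgClosed_of_finiteDimensional K B)] at h0
    obtain ⟨k, hkB, hkA⟩ := h0
    exact hAB.ne_of_mem (mem_spectrum_iff_isRoot_charpoly.2 hkA) hkB rfl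
  obtain ⟨u, hu⟩ := hunit
  rw [← Matrix.one_mul Z, ← u.inv_mul, Matrix.mul_assoc, hu, hZ, Matrix.mul_zero]

theorem spectrum_neg_conjTranspose (A : Matrix n n ℂ) :
    spectrum ℂ (-Aᴴ) = -star (spectrum ℂ A) := by
  rw [← spectrum.neg_eq, ← star_eq_conjTranspose, spectrum.map_star]

theorem disjoint_spectrum_neg_conjTranspose {A : Matrix n n ℂ}
    (hA : ∀ μ ∈ spectrum ℂ A, 0 < μ.re) : Disjoint (spectrum ℂ A) (spectrum ℂ (-Aᴴ)) := by
  rw [spectrum_neg_conjTranspose, Set.disjoint_left]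
  intro μ hμ hμ'
  have := hA _ (Set.mem_star.1 (Set.mem_neg.1 hμ'))
  simp only [star_neg, Complex.star_def, Complex.neg_re, Complex.conj_re] at this
  linarith [hA μ hμ]

def lyapunovMap [CommSemiring R] [StarRing R] (X : Matrix n n R) :
    Matrix n n R →ₗ[R] Matrix n n R :=
  LinearMap.mulRight R X + LinearMap.mulLeft R Xᴴ

theorem lyapunovMap_apply [CommSemiring R] [StarRing R] (X Z : Matrix n n R) :
    lyapunovMap X Z = Z * X + Xᴴ * Z :=
  rfl

theorem lyapunovMap_conjTranspose [CommSemiring R] [StarRing R] (X Z : Matrix n n R) :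
    lyapunovMap X Zᴴ = (lyapunovMap X Z)ᴴ := by
  simp only [lyapunovMap_apply, conjTranspose_add, conjTranspose_mul, conjTranspose_conjTranspose,
    add_comm]

theorem lyapunovMap_injective {X : Matrix n n ℂ} (hX : ∀ μ ∈ spectrum ℂ X, 0 < μ.re) :
    Function.Injective (lyapunovMap X) := by
  refine (injective_iff_map_eq_zero _).2 fun Z hZ => ?_
  refine eq_zero_of_mul_eq_mul_of_disjoint_spectrum (disjoint_spectrum_neg_conjTranspose hX) ?_
  rwa [Matrix.neg_mul, eq_neg_iff_add_eq_zero, ← lyapunovMap_apply]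

theorem lyapunovMap_bijective {X : Matrix n n ℂ} (hX : ∀ μ ∈ spectrum ℂ X, 0 < μ.re) :
    Function.Bijective (lyapunovMap X) :=
  ⟨lyapunovMap_injective hX, LinearMap.injective_iff_surjective.1 (lyapunovMap_injective hX)⟩

end Matrix

theorem stmt_3 {N : ℕ} (X C : Matrix (Fin N) (Fin N) ℂ)
    (hX : ∀ μ ∈ spectrum ℂ X, 0 < μ.re)
    (hC : C.IsHermitian) :
    (∃! Z : Matrix (Fin N) (Fin N) ℂ, Z * X + Xᴴ * Z = C) ∧
    (∀ Z : Matrix (Fin N) (Fin N) ℂ, Z * X + Xᴴ * Z = C → Z.IsHermitian) := by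
  refine ⟨(lyapunovMap_bijective hX).existsUnique C, fun Z hZ => ?_⟩
  rw [← lyapunovMap_apply] at hZ
  refine lyapunovMap_injective hX ?_
  rw [lyapunovMap_conjTranspose, hZ, hC.eq]
end

section
/- Let H, M_l, M_g be N×N complex matrices with H Hermitian and M_l, M_g positive semidefinite Hermitian, set X := −i•H + M_l + M_gᵀ and L_eff := fromBlocks(−i•H − M_l + M_gᵀ, 2•M_gᵀ, 2•M_l, −i•H + M_l − M_gᵀ), suppose Z satisfies the Sylvester equation Z⬝X + Xᴴ⬝Z + 2•(M_gᵀ − M_l) = 0, and suppose there is Δ > 0 such that every eigenvalue μ ∈ spectrum ℂ X satisfies Re μ ≥ Δ. Define F := fromBlocks(−Z, 1−Z, 1+Z, Z). Then for every t ∈ [0,1], every eigenvalue μ ∈ spectrum ℂ ((1−t)•L_eff + t•F) satisfies |Re μ| ≥ min 1 Δ. -/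
open Matrix ComplexOrder

/-!
Conjugating by the shear `fromBlocks 1 1 0 1` turns both `L_eff` and `F`, hence every point of
the segment `(1 - t) • L_eff + t • F`, into a block lower-triangular matrix with diagonal blocks
`B = (1 - t) • X + t • 1` and `-Bᴴ`. So the spectrum on the segment is
`σ(B) ∪ -conj σ(B)`, and an eigenvalue `t + (1 - t) ν` of `B`, with `ν ∈ σ(X)`, has real part at
least `t + (1 - t) Δ ≥ min 1 Δ`.
-/

namespace Matrix

variable {K n : Type*} [Field K] [Fintype n] [DecidableEq n]

theorem spectrum_fromBlocks_zero₁₂ (A C D : Matrix n n K) :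
    spectrum K (fromBlocks A 0 C D) = spectrum K A ∪ spectrum K D := by
  ext μ
  simp only [Set.mem_union, mem_spectrum_iff_isRoot_charpoly, charpoly_fromBlocks_zero₁₂,
    Polynomial.IsRoot.def, Polynomial.eval_mul, mul_eq_zero]

theorem spectrum_fromBlocks_of_add_eq_add {A B C D : Matrix n n K} (h : A + C = B + D) :
    spectrum K (fromBlocks A B C D) = spectrum K (A + C) ∪ spectrum K (D - C) := by
  let shear : (Matrix (n ⊕ n) (n ⊕ n) K)ˣ :=
    { val := fromBlocks 1 (-1) 0 1
      inv := fromBlocks 1 1 0 1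
      val_inv := by simp [fromBlocks_multiply, ← fromBlocks_one]
      inv_val := by simp [fromBlocks_multiply, ← fromBlocks_one] }
  have hconj : ((shear⁻¹ : _ˣ) : Matrix (n ⊕ n) (n ⊕ n) K) * fromBlocks A B C D * shear
      = fromBlocks (A + C) 0 C (D - C) := by
    simp only [shear, Units.inv_mk, fromBlocks_multiply]
    congr 1 <;> simp [h, neg_add_eq_sub]
  rw [← spectrum.units_conjugate' (u := shear), hconj, spectrum_fromBlocks_zero₁₂]

end Matrix

namespace spectrum

variable {R A : Type*} [CommRing R] [StarRing R] [Ring A] [Algebra R A] [StarRing A]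
  [StarModule R A]

theorem mem_neg_star_iff {a : A} {μ : R} : μ ∈ spectrum R (-star a) ↔ -star μ ∈ spectrum R a := by
  rw [← spectrum.neg_eq, Set.mem_neg, spectrum.map_star, Set.mem_star, star_neg]

end spectrum

section ConvexCombOne

variable {A : Type*} [Ring A] [Algebra ℂ A]

theorem exists_of_mem_spectrum_convexComb_one {a : A} {t : ℝ} (ht : t < 1) {μ : ℂ}
    (hμ : μ ∈ spectrum ℂ ((1 - t) • a + t • 1)) :
    ∃ ν ∈ spectrum ℂ a, μ = t + (1 - t) * ν := by
  have hs : ((1 - t : ℝ) : ℂ) ≠ 0 := Complex.ofReal_ne_zero.mpr (sub_ne_zero.mpr ht.ne')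
  have hrw : (1 - t) • a + t • (1 : A) = algebraMap ℂ A t + Units.mk0 _ hs • a := by
    rw [add_comm, Units.smul_def, Units.val_mk0, Algebra.algebraMap_eq_smul_one,
      ← Complex.coe_algebraMap, algebraMap_smul, algebraMap_smul]
  rw [hrw, ← spectrum.vadd_eq, spectrum.unit_smul_eq_smul] at hμ
  obtain ⟨_, ⟨ν, hν, rfl⟩, rfl⟩ := hμ
  exact ⟨ν, hν, by simp⟩

theorem min_one_le_re_of_mem_spectrum_convexComb_one {a : A} {Δ : ℝ}
    (hgap : ∀ ν ∈ spectrum ℂ a, Δ ≤ ν.re) {t : ℝ} (ht : t ∈ Set.Icc 0 1) {μ : ℂ}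
    (hμ : μ ∈ spectrum ℂ ((1 - t) • a + t • 1)) : min 1 Δ ≤ μ.re := by
  obtain ⟨ht0, ht1⟩ := ht
  rcases ht1.lt_or_eq with ht1 | rfl
  · obtain ⟨ν, hν, rfl⟩ := exists_of_mem_spectrum_convexComb_one ht1 hμ
    have hre : (t + (1 - t) * ν : ℂ).re = t + (1 - t) * ν.re := by simp
    rw [hre]
    nlinarith [hgap ν hν, min_le_left 1 Δ, min_le_right 1 Δ]
  · simp only [sub_self, zero_smul, one_smul, zero_add] at hμ
    rcases subsingleton_or_nontrivial A with hA | hA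
    · simp [spectrum.of_subsingleton] at hμ
    · rw [spectrum.one_eq, Set.mem_singleton_iff] at hμ
      simp [hμ]

end ConvexCombOne

theorem stmt_6_general {N : ℕ} (H Ml Mg Z : Matrix (Fin N) (Fin N) ℂ)
    (hH : H.IsHermitian) (hMl : Ml.PosSemidef) (hMg : Mg.PosSemidef)
    (X : Matrix (Fin N) (Fin N) ℂ)
    (hX : X = (-Complex.I) • H + Ml + Mgᵀ)
    (Leff : Matrix (Fin N ⊕ Fin N) (Fin N ⊕ Fin N) ℂ)
    (hLeff : Leff = fromBlocks ((-Complex.I) • H - Ml + Mgᵀ) ((2 : ℂ) • Mgᵀ)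
      ((2 : ℂ) • Ml) ((-Complex.I) • H + Ml - Mgᵀ))
    (Δ : ℝ)
    (hgap : ∀ μ ∈ spectrum ℂ X, Δ ≤ μ.re)
    (F : Matrix (Fin N ⊕ Fin N) (Fin N ⊕ Fin N) ℂ)
    (hF : F = fromBlocks (-Z) (1 - Z) (1 + Z) Z) :
    ∀ t ∈ Set.Icc (0 : ℝ) 1,
      ∀ μ ∈ spectrum ℂ ((1 - t) • Leff + t • F), min 1 Δ ≤ |μ.re| := by
  intro t ht μ hμ
  set B := (1 - t) • X + t • (1 : Matrix (Fin N) (Fin N) ℂ)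
  have hXH : Xᴴ = Complex.I • H + Ml + Mgᵀ := by
    simp [hX, conjTranspose_add, hH.eq, hMl.isHermitian.eq, hMg.isHermitian.transpose.eq]
  rw [hLeff, hF, fromBlocks_smul, fromBlocks_smul, fromBlocks_add,
    spectrum_fromBlocks_of_add_eq_add (by module)] at hμ
  have hsum : (1 - t) • ((-Complex.I) • H - Ml + Mgᵀ) + t • -Z
      + ((1 - t) • ((2 : ℂ) • Ml) + t • (1 + Z)) = B := by
    simp only [B, hX]
    module
  have hdiff : (1 - t) • ((-Complex.I) • H + Ml - Mgᵀ) + t • Z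
      - ((1 - t) • ((2 : ℂ) • Ml) + t • (1 + Z)) = -star B := by
    simp only [B, star_add, star_smul, star_one, star_trivial, star_eq_conjTranspose, hXH]
    module
  rw [hsum, hdiff, Set.mem_union, spectrum.mem_neg_star_iff] at hμ
  rcases hμ with hμ | hμ
  · exact (min_one_le_re_of_mem_spectrum_convexComb_one hgap ht hμ).trans (le_abs_self _)
  · simpa using (min_one_le_re_of_mem_spectrum_convexComb_one hgap ht hμ).trans (neg_le_abs _)

theorem stmt_6 {N : ℕ} (H Ml Mg Z : Matrix (Fin N) (Fin N) ℂ)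
    (hH : H.IsHermitian) (hMl : Ml.PosSemidef) (hMg : Mg.PosSemidef)
    (X : Matrix (Fin N) (Fin N) ℂ)
    (hX : X = (-Complex.I) • H + Ml + Mgᵀ)
    (Leff : Matrix (Fin N ⊕ Fin N) (Fin N ⊕ Fin N) ℂ)
    (hLeff : Leff = fromBlocks ((-Complex.I) • H - Ml + Mgᵀ) ((2 : ℂ) • Mgᵀ)
      ((2 : ℂ) • Ml) ((-Complex.I) • H + Ml - Mgᵀ))
    (hZ : Z * X + Xᴴ * Z + (2 : ℂ) • (Mgᵀ - Ml) = 0)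
    (Δ : ℝ) (hΔ : 0 < Δ)
    (hgap : ∀ μ ∈ spectrum ℂ X, Δ ≤ μ.re)
    (F : Matrix (Fin N ⊕ Fin N) (Fin N ⊕ Fin N) ℂ)
    (hF : F = fromBlocks (-Z) (1 - Z) (1 + Z) Z) :
    ∀ t ∈ Set.Icc (0 : ℝ) 1,
      ∀ μ ∈ spectrum ℂ ((1 - t) • Leff + t • F), min 1 Δ ≤ |μ.re| :=
  stmt_6_general H Ml Mg Z hH hMl hMg X hX Leff hLeff Δ hgap F hF
end

section
/- Let J be an n×n complex matrix with J⬝J = 1, and let a, b be nonnegative real numbers. Then every eigenvalue μ ∈ spectrum ℂ (a•J + b•Jᴴ) satisfies |μ| ≥ √(a² + b²). In particular, if a + b = 1 then |μ| ≥ √2/2. -/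
open Matrix

lemma dp_star_self {n : ℕ} (x : Fin n → ℂ) :
    star x ⬝ᵥ x = ((∑ i, Complex.normSq (x i) : ℝ) : ℂ) := by
  simp [dotProduct, mul_comm, Complex.mul_conj]

theorem stmt_8 {n : ℕ} (J : Matrix (Fin n) (Fin n) ℂ) (hJ : J * J = 1)
    (a b : ℝ) (ha : 0 ≤ a) (hb : 0 ≤ b) :
    (∀ μ ∈ spectrum ℂ (a • J + b • Jᴴ), Real.sqrt (a ^ 2 + b ^ 2) ≤ ‖μ‖) ∧
    (a + b = 1 → ∀ μ ∈ spectrum ℂ (a • J + b • Jᴴ), Real.sqrt 2 / 2 ≤ ‖μ‖) := by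
  have key : ∀ μ ∈ spectrum ℂ (a • J + b • Jᴴ), Real.sqrt (a ^ 2 + b ^ 2) ≤ ‖μ‖ := by
    intro μ hμ
    set M : Matrix (Fin n) (Fin n) ℂ := a • J + b • Jᴴ with hMdef
    rw [spectrum.mem_iff] at hμ
    have hdet : (algebraMap ℂ (Matrix (Fin n) (Fin n) ℂ) μ - M).det = 0 := by
      by_contra h
      exact hμ ((Matrix.isUnit_iff_isUnit_det _).2 (isUnit_iff_ne_zero.2 h))
    obtain ⟨v, hv0, hv⟩ := Matrix.exists_mulVec_eq_zero_iff.2 hdet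
    have hMv : M *ᵥ v = μ • v := by
      rw [Algebra.algebraMap_eq_smul_one, Matrix.sub_mulVec, Matrix.smul_mulVec,
        Matrix.one_mulVec, sub_eq_zero] at hv
      exact hv.symm
    have h2 : (M * M) *ᵥ v = (μ * μ) • v := by
      rw [← Matrix.mulVec_mulVec, hMv, Matrix.mulVec_smul, hMv, smul_smul]
    have hJHJH : Jᴴ * Jᴴ = 1 := by
      rw [← Matrix.conjTranspose_mul, hJ, Matrix.conjTranspose_one]
    have hMM : M * M = ((a^2+b^2 : ℝ)) • (1 : Matrix (Fin n) (Fin n) ℂ)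
        + ((a*b : ℝ)) • (J * Jᴴ) + ((a*b : ℝ)) • (Jᴴ * J) := by
      simp only [hMdef, add_mul, mul_add, smul_mul_assoc, Matrix.mul_smul, hJ, hJHJH,
        smul_smul]
      module
    -- dot products
    set c : ℝ := ∑ i, Complex.normSq (v i) with hc
    have hcpos : 0 < c := by
      have : ∃ i, v i ≠ 0 := by
        by_contra h
        push_neg at h
        exact hv0 (funext h)
      obtain ⟨i, hi⟩ := this
      exact Finset.sum_pos' (fun j _ => Complex.normSq_nonneg _)
        ⟨i, Finset.mem_univ i, Complex.normSq_pos.2 hi⟩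
    set w : Fin n → ℂ := Jᴴ *ᵥ v with hw
    set u : Fin n → ℂ := J *ᵥ v with hu
    have dJJH : star v ⬝ᵥ ((J * Jᴴ) *ᵥ v) = star w ⬝ᵥ w := by
      rw [← Matrix.mulVec_mulVec, Matrix.dotProduct_mulVec, hw, Matrix.star_mulVec,
        Matrix.conjTranspose_conjTranspose]
    have dJHJ : star v ⬝ᵥ ((Jᴴ * J) *ᵥ v) = star u ⬝ᵥ u := by
      rw [← Matrix.mulVec_mulVec, Matrix.dotProduct_mulVec, hu, Matrix.star_mulVec]
    set r₁ : ℝ := ∑ i, Complex.normSq (w i) with hr1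
    set r₂ : ℝ := ∑ i, Complex.normSq (u i) with hr2
    have main : (μ * μ) * (c : ℂ) = ((a^2+b^2) * c + (a*b) * r₁ + (a*b) * r₂ : ℝ) := by
      have lhs1 : star v ⬝ᵥ ((M * M) *ᵥ v) = (μ * μ) * (c : ℂ) := by
        rw [h2, dotProduct_smul, dp_star_self, smul_eq_mul]
      have lhs2 : star v ⬝ᵥ ((M * M) *ᵥ v)
          = ((a^2+b^2) * c + (a*b) * r₁ + (a*b) * r₂ : ℝ) := by
        rw [hMM]
        simp only [Matrix.add_mulVec, Matrix.smul_mulVec, Matrix.one_mulVec,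
          dotProduct_add, dotProduct_smul]
        rw [dJJH, dJHJ, dp_star_self, dp_star_self, dp_star_self]
        rw [hr1, hr2, hc]
        push_cast
        simp [smul_eq_mul]
      rw [← lhs1, lhs2]
    set s : ℝ := (a^2+b^2) * c + (a*b) * r₁ + (a*b) * r₂ with hs
    have hsge : (a^2+b^2) * c ≤ s := by
      have h1 : 0 ≤ (a*b) * r₁ := mul_nonneg (mul_nonneg ha hb)
        (Finset.sum_nonneg fun i _ => Complex.normSq_nonneg _)
      have h2 : 0 ≤ (a*b) * r₂ := mul_nonneg (mul_nonneg ha hb)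
        (Finset.sum_nonneg fun i _ => Complex.normSq_nonneg _)
      linarith
    have hsnn : 0 ≤ s := le_trans (by positivity) hsge
    have habs : ‖μ‖ ^ 2 * c = s := by
      have := congrArg (fun z : ℂ => ‖z‖) main
      rwa [norm_mul, norm_mul, Complex.norm_real, Complex.norm_real, Real.norm_eq_abs,
        Real.norm_eq_abs, abs_of_pos hcpos, abs_of_nonneg hsnn, ← sq] at this
    have hfin : a^2 + b^2 ≤ ‖μ‖ ^ 2 := by
      have : (a^2+b^2) * c ≤ ‖μ‖ ^ 2 * c := by rw [habs]; exact hsge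
      exact le_of_mul_le_mul_right this hcpos
    calc Real.sqrt (a^2+b^2) ≤ Real.sqrt (‖μ‖ ^ 2) := Real.sqrt_le_sqrt hfin
      _ = ‖μ‖ := Real.sqrt_sq (norm_nonneg μ)
  refine ⟨key, fun hab μ hμ => ?_⟩
  have h12 : (1:ℝ)/2 ≤ a^2 + b^2 := by nlinarith [sq_nonneg (a-b)]
  have hsqrt : Real.sqrt 2 / 2 = Real.sqrt (1/2) := by
    rw [show (1:ℝ)/2 = (Real.sqrt 2 / 2)^2 by
      rw [div_pow, Real.sq_sqrt (by norm_num : (0:ℝ) ≤ 2)]; norm_num]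
    rw [Real.sqrt_sq (by positivity)]
  calc Real.sqrt 2 / 2 = Real.sqrt (1/2) := hsqrt
    _ ≤ Real.sqrt (a^2+b^2) := Real.sqrt_le_sqrt h12
    _ ≤ ‖μ‖ := key μ hμ
end

section
/- Let A be an n×n complex matrix such that every eigenvalue μ ∈ spectrum ℂ A satisfies Re μ ≠ 0. Then there exists an n×n complex matrix F such that: F⬝A = A⬝F; F⬝F = 1; and for every eigenvalue μ ∈ spectrum ℂ A and every vector v ∈ ℂⁿ with ((A − μ•1)^n) *ᵥ v = 0, one has F *ᵥ v = v if Re μ > 0 and F *ᵥ v = −v if Re μ < 0. -/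
/-!
Take `F = p(A)` for a polynomial `p` with `p ≡ 1` modulo `∏_{Re μ > 0} (X - μ)ⁿ` and `p ≡ -1`
modulo the product over the remaining roots `μ` of the characteristic polynomial; the two moduli
are coprime, so `p` exists by the Chinese remainder theorem. Their product is a multiple of the
characteristic polynomial, so Cayley–Hamilton turns `p² ≡ 1` into `F² = 1`, and on the
generalized eigenspace of `μ` the operator `F` acts through the residue of `p` modulo `(X - μ)ⁿ`.
-/

open Matrix Polynomial

theorem IsCoprime.exists_dvd_sub_one_and_dvd_add_one {R : Type*} [CommRing R] {f g : R}
    (h : IsCoprime f g) : ∃ p, f ∣ p - 1 ∧ g ∣ p + 1 := by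
  obtain ⟨a, b, hab⟩ := h
  exact ⟨b * g - a * f, ⟨-2 * a, by linear_combination hab⟩,
    ⟨2 * b, by linear_combination -hab⟩⟩

namespace Polynomial

variable {K : Type*} [Field K]

theorem isCoprime_prod_X_sub_C_pow_of_disjoint {s t : Finset K} (hst : Disjoint s t) (k : ℕ) :
    IsCoprime (∏ μ ∈ s, (X - C μ) ^ k) (∏ ν ∈ t, (X - C ν) ^ k) :=
  IsCoprime.prod_left fun _ hμ => IsCoprime.prod_right fun _ hν =>
    (isCoprime_X_sub_C_of_isUnit_sub
      (sub_ne_zero.2 (Finset.disjoint_iff_ne.1 hst _ hμ _ hν)).isUnit).pow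

theorem Monic.dvd_prod_X_sub_C_pow_natDegree [IsAlgClosed K] [DecidableEq K] {q : K[X]}
    (hq : q.Monic) : q ∣ ∏ μ ∈ q.roots.toFinset, (X - C μ) ^ q.natDegree := by
  conv_lhs => rw [(IsAlgClosed.splits q).eq_prod_roots_of_monic hq, Finset.prod_multiset_map_count]
  exact Finset.prod_dvd_prod_of_dvd _ _ fun μ _ =>
    pow_dvd_pow _ ((Multiset.count_le_card _ _).trans (card_roots' q))

theorem aeval_mul_self_eq_one_of_dvd {R S : Type*} [CommRing R] [Ring S] [Algebra R S] {x : S}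
    {p q : R[X]} (hq : aeval x q = 0) (hpq : q ∣ p * p - 1) : aeval x p * aeval x p = 1 := by
  rw [← map_mul, ← sub_eq_zero, ← map_one (aeval (R := R) x), ← map_sub]
  exact aeval_eq_zero_of_dvd_aeval_eq_zero hpq hq

end Polynomial

namespace Matrix

variable {ι R : Type*} [Fintype ι] [DecidableEq ι] [CommRing R]

theorem aeval_mulVec_eq_smul_of_dvd (A : Matrix ι ι R) {p q : R[X]} {c : R} {v : ι → R}
    (hpq : q ∣ p - C c) (hv : aeval A q *ᵥ v = 0) : aeval A p *ᵥ v = c • v := by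
  obtain ⟨r, hr⟩ := hpq
  have : aeval A (p - C c) *ᵥ v = 0 := by
    rw [hr, map_mul, (Commute.all q r).map (aeval A) |>.eq, ← mulVec_mulVec, hv, mulVec_zero]
  rwa [map_sub, aeval_C, Algebra.algebraMap_eq_smul_one, sub_mulVec, smul_mulVec, one_mulVec,
    sub_eq_zero] at this

theorem aeval_X_sub_C_pow (A : Matrix ι ι R) (μ : R) (k : ℕ) :
    aeval A ((X - C μ) ^ k) = (A - μ • 1) ^ k := by
  rw [map_pow, map_sub, aeval_X, aeval_C, Algebra.algebraMap_eq_smul_one]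

end Matrix

theorem stmt_9_general {n : ℕ} (A : Matrix (Fin n) (Fin n) ℂ) :
    ∃ F : Matrix (Fin n) (Fin n) ℂ,
      F * A = A * F ∧ F * F = 1 ∧
      ∀ μ ∈ spectrum ℂ A, ∀ v : Fin n → ℂ, ((A - μ • 1) ^ n) *ᵥ v = 0 →
        (0 < μ.re → F *ᵥ v = v) ∧ (μ.re < 0 → F *ᵥ v = -v) := by
  classical
  set S := A.charpoly.roots.toFinset
  obtain ⟨p, hp, hm⟩ := (isCoprime_prod_X_sub_C_pow_of_disjoint
    (Finset.disjoint_filter_filter_not S S (0 < ·.re)) n).exists_dvd_sub_one_and_dvd_add_one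
  have hS : aeval A (∏ μ ∈ S, (X - C μ) ^ n) = 0 := by
    refine aeval_eq_zero_of_dvd_aeval_eq_zero ?_ (aeval_self_charpoly A)
    simpa using A.charpoly_monic.dvd_prod_X_sub_C_pow_natDegree
  have hpp : ∏ μ ∈ S, (X - C μ) ^ n ∣ p * p - 1 := by
    rw [← Finset.prod_filter_mul_prod_filter_not S (0 < ·.re), mul_self_sub_one,
      mul_comm (p + 1)]
    exact mul_dvd_mul hp hm
  refine ⟨aeval A p, by simpa using ((Commute.all p X).map (aeval A)).eq,
    aeval_mul_self_eq_one_of_dvd hS hpp, fun μ hμ v hv => ?_⟩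
  have hμS : μ ∈ S := Multiset.mem_toFinset.2 <|
    (mem_roots A.charpoly_monic.ne_zero).2 (mem_spectrum_iff_isRoot_charpoly.1 hμ)
  have hfactor (T : Finset ℂ) (hT : μ ∈ T) : (X - C μ) ^ n ∣ ∏ ν ∈ T, (X - C ν) ^ n :=
    Finset.dvd_prod_of_mem _ hT
  have hv' : aeval A ((X - C μ) ^ n) *ᵥ v = 0 := by rwa [aeval_X_sub_C_pow]
  refine ⟨fun hpos => ?_, fun hneg => ?_⟩
  · have hdvd : (X - C μ) ^ n ∣ p - C 1 :=
      (hfactor _ (Finset.mem_filter.2 ⟨hμS, hpos⟩)).trans (by rwa [C_1])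
    exact (A.aeval_mulVec_eq_smul_of_dvd hdvd hv').trans (one_smul ℂ v)
  · have hdvd : (X - C μ) ^ n ∣ p - C (-1) :=
      (hfactor _ (Finset.mem_filter.2 ⟨hμS, hneg.not_gt⟩)).trans
        (by rwa [C_neg, C_1, sub_neg_eq_add])
    exact (A.aeval_mulVec_eq_smul_of_dvd hdvd hv').trans (neg_one_smul ℂ v)

theorem stmt_9 {n : ℕ} (A : Matrix (Fin n) (Fin n) ℂ)
    (hA : ∀ μ ∈ spectrum ℂ A, μ.re ≠ 0) :
    ∃ F : Matrix (Fin n) (Fin n) ℂ,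
      F * A = A * F ∧ F * F = 1 ∧
      ∀ μ ∈ spectrum ℂ A, ∀ v : Fin n → ℂ, ((A - μ • 1) ^ n) *ᵥ v = 0 →
        (0 < μ.re → F *ᵥ v = v) ∧ (μ.re < 0 → F *ᵥ v = -v) :=
  stmt_9_general A
end

section
/- Let A be an n×n complex matrix such that every eigenvalue μ ∈ spectrum ℂ A satisfies Re μ ≠ 0, let U be a unitary n×n matrix, let η ∈ {1, −1}, and suppose A = η • (U ⬝ conj(A) ⬝ Uᴴ), where conj denotes entrywise complex conjugation. Let F be a spectral sign of A, i.e. F⬝A = A⬝F, F⬝F = 1, and for every eigenvalue μ ∈ spectrum ℂ A and every v ∈ ℂⁿ with ((A − μ•1)^n) *ᵥ v = 0 one has F *ᵥ v = v if Re μ > 0 and F *ᵥ v = −v if Re μ < 0. Then F = η • (U ⬝ conj(F) ⬝ Uᴴ). -/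
/-!
The antiunitary map `v ↦ U v̄` intertwines `A` with `η A`, so it carries the generalized
eigenspace of `A` at `η μ̄` onto the one at `μ`. Since `Re (η μ̄) = η Re μ`, the matrix
`η U F̄ Uᴴ` acts there as `η · η sign (Re μ) = sign (Re μ)`: it is again a spectral sign of `A`.
A spectral sign is unique, because the generalized eigenspaces span `ℂⁿ` and, as no eigenvalue
is imaginary, the action on each of them is prescribed.
-/

open Matrix

namespace Matrix

variable {ι : Type*} [Fintype ι]

theorem map_starRingEnd_mulVec_star (M : Matrix ι ι ℂ) (w : ι → ℂ) :
    M.map (starRingEnd ℂ) *ᵥ star w = star (M *ᵥ w) :=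
  funext fun i => ((starRingEnd ℂ).map_mulVec M w i).symm

variable [DecidableEq ι]

section Field

variable {K : Type*} [Field K]

theorem eq_zero_of_pow_sub_smul_one_mulVec_eq_zero {A : Matrix ι ι K} {μ : K}
    (hμ : μ ∉ spectrum K A) (k : ℕ) {v : ι → K} (hv : ((A - μ • 1) ^ k) *ᵥ v = 0) : v = 0 := by
  rw [spectrum.notMem_iff, Algebra.algebraMap_eq_smul_one, ← IsUnit.neg_iff, neg_sub] at hμ
  exact mulVec_injective_iff_isUnit.mpr (hμ.pow k) (hv.trans (mulVec_zero _).symm)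

theorem ext_of_mulVec_genEigenvector [IsAlgClosed K] {A F G : Matrix ι ι K}
    (h : ∀ (μ : K) v, ((A - μ • 1) ^ Fintype.card ι) *ᵥ v = 0 → F *ᵥ v = G *ᵥ v) : F = G := by
  have hle : ⨆ μ, Module.End.maxGenEigenspace (toLinAlgEquiv' A) μ ≤
      LinearMap.ker (toLinAlgEquiv' (F - G)) := by
    refine iSup_le fun μ v hv => ?_
    rw [Module.End.maxGenEigenspace_eq_genEigenspace_finrank, Module.finrank_fintype_fun_eq_card,
      Module.End.mem_genEigenspace_nat, LinearMap.mem_ker] at hv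
    rw [← map_one toLinAlgEquiv', ← map_smul, ← map_sub, ← map_pow, toLinAlgEquiv'_apply] at hv
    rw [LinearMap.mem_ker, toLinAlgEquiv'_apply, sub_mulVec, h μ v hv, sub_self]
  rw [Module.End.iSup_maxGenEigenspace_eq_top, top_le_iff, LinearMap.ker_eq_top] at hle
  exact sub_eq_zero.mp (toLinAlgEquiv'.injective (hle.trans (map_zero _).symm))

end Field

noncomputable def antiunitaryConj (U : unitaryGroup ι ℂ) : Matrix ι ι ℂ →+* Matrix ι ι ℂ :=
  (Unitary.conjStarAlgAut ℂ (Matrix ι ι ℂ) U : Matrix ι ι ℂ →+* Matrix ι ι ℂ).comp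
    (starRingEnd ℂ).mapMatrix

theorem antiunitaryConj_apply (U : unitaryGroup ι ℂ) (M : Matrix ι ι ℂ) :
    antiunitaryConj U M = U * M.map (starRingEnd ℂ) * (U : Matrix ι ι ℂ)ᴴ := rfl

theorem antiunitaryConj_smul (U : unitaryGroup ι ℂ) (c : ℂ) (M : Matrix ι ι ℂ) :
    antiunitaryConj U (c • M) = starRingEnd ℂ c • antiunitaryConj U M := by
  simp only [antiunitaryConj_apply, Matrix.map_smul' _ _ _ (map_mul _), Matrix.mul_smul,
    Matrix.smul_mul]

theorem antiunitaryConj_mulVec (U : unitaryGroup ι ℂ) (M : Matrix ι ι ℂ) (w : ι → ℂ) :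
    antiunitaryConj U M *ᵥ ((U : Matrix ι ι ℂ) *ᵥ star w) =
      (U : Matrix ι ι ℂ) *ᵥ star (M *ᵥ w) := by
  have hU : (U : Matrix ι ι ℂ)ᴴ * U = 1 := mem_unitaryGroup_iff'.mp U.2
  rw [antiunitaryConj_apply, mulVec_mulVec, Matrix.mul_assoc, Matrix.mul_assoc, hU,
    Matrix.mul_one, ← mulVec_mulVec, map_starRingEnd_mulVec_star]

theorem sub_smul_one_eq_smul_antiunitaryConj {A : Matrix ι ι ℂ} {U : unitaryGroup ι ℂ} {η : ℂ}
    (hη : η = 1 ∨ η = -1) (hsym : A = η • antiunitaryConj U A) (μ : ℂ) :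
    A - μ • 1 = η • antiunitaryConj U (A - (η * starRingEnd ℂ μ) • 1) := by
  rw [map_sub, antiunitaryConj_smul, map_one, smul_sub, ← hsym]
  rcases hη with rfl | rfl <;> simp

theorem pow_sub_smul_one_mulVec_eq_zero_of_antiunitaryConj {A : Matrix ι ι ℂ}
    {U : unitaryGroup ι ℂ} {η : ℂ} (hη : η = 1 ∨ η = -1) (hsym : A = η • antiunitaryConj U A)
    {μ : ℂ} {k : ℕ} {w : ι → ℂ}
    (h : ((A - μ • 1) ^ k) *ᵥ ((U : Matrix ι ι ℂ) *ᵥ star w) = 0) :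
    ((A - (η * starRingEnd ℂ μ) • 1) ^ k) *ᵥ w = 0 := by
  have hηk : η ^ k ≠ 0 := pow_ne_zero _ (by rcases hη with rfl | rfl <;> norm_num)
  rw [sub_smul_one_eq_smul_antiunitaryConj hη hsym, smul_pow, ← map_pow, smul_mulVec,
    antiunitaryConj_mulVec, smul_eq_zero, or_iff_right hηk, ← mulVec_zero (U : Matrix ι ι ℂ)] at h
  simpa using mulVec_injective_iff_isUnit.mpr Unitary.isUnit_coe h

def IsSpectralSign (A F : Matrix ι ι ℂ) : Prop :=
  ∀ (μ : ℂ) (v : ι → ℂ), ((A - μ • 1) ^ Fintype.card ι) *ᵥ v = 0 →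
    (0 < μ.re → F *ᵥ v = v) ∧ (μ.re < 0 → F *ᵥ v = -v)

theorem isSpectralSign_of_forall_mem_spectrum {A F : Matrix ι ι ℂ}
    (hF : ∀ μ ∈ spectrum ℂ A, ∀ v : ι → ℂ, ((A - μ • 1) ^ Fintype.card ι) *ᵥ v = 0 →
      (0 < μ.re → F *ᵥ v = v) ∧ (μ.re < 0 → F *ᵥ v = -v)) :
    IsSpectralSign A F := by
  intro μ v hv
  by_cases hμ : μ ∈ spectrum ℂ A
  · exact hF μ hμ v hv
  · simp [eq_zero_of_pow_sub_smul_one_mulVec_eq_zero hμ _ hv]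

theorem IsSpectralSign.eq {A F G : Matrix ι ι ℂ} (hA : ∀ μ ∈ spectrum ℂ A, μ.re ≠ 0)
    (hF : IsSpectralSign A F) (hG : IsSpectralSign A G) : F = G := by
  refine ext_of_mulVec_genEigenvector (A := A) fun μ v hv => ?_
  by_cases hμ : μ ∈ spectrum ℂ A
  · rcases (hA μ hμ).lt_or_gt with hneg | hpos
    · rw [(hF μ v hv).2 hneg, (hG μ v hv).2 hneg]
    · rw [(hF μ v hv).1 hpos, (hG μ v hv).1 hpos]
  · simp [eq_zero_of_pow_sub_smul_one_mulVec_eq_zero hμ _ hv]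

theorem IsSpectralSign.smul_antiunitaryConj {A F : Matrix ι ι ℂ} {U : unitaryGroup ι ℂ} {η : ℂ}
    (hη : η = 1 ∨ η = -1) (hsym : A = η • antiunitaryConj U A) (hF : IsSpectralSign A F) :
    IsSpectralSign A (η • antiunitaryConj U F) := by
  intro μ v hv
  have hU : (U : Matrix ι ι ℂ) * (U : Matrix ι ι ℂ)ᴴ = 1 := mem_unitaryGroup_iff.mp U.2
  obtain ⟨w, rfl⟩ : ∃ w, (U : Matrix ι ι ℂ) *ᵥ star w = v :=
    ⟨star ((U : Matrix ι ι ℂ)ᴴ *ᵥ v), by rw [star_star, mulVec_mulVec, hU, one_mulVec]⟩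
  have hw := hF _ w (pow_sub_smul_one_mulVec_eq_zero_of_antiunitaryConj hη hsym hv)
  rw [smul_mulVec, antiunitaryConj_mulVec]
  rcases hη with rfl | rfl
  · simp only [one_mul, Complex.conj_re] at hw
    simp only [one_smul]
    exact ⟨fun h => by rw [hw.1 h], fun h => by rw [hw.2 h, star_neg, mulVec_neg]⟩
  · simp only [neg_mul, one_mul, Complex.neg_re, Complex.conj_re, Left.neg_pos_iff,
      Left.neg_neg_iff] at hw
    simp only [neg_smul, one_smul]
    exact ⟨fun h => by rw [hw.2 h, star_neg, mulVec_neg, neg_neg],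
      fun h => by rw [hw.1 h]⟩

end Matrix

theorem stmt_11_general {n : ℕ} (A U F : Matrix (Fin n) (Fin n) ℂ) (η : ℂ)
    (hA : ∀ μ ∈ spectrum ℂ A, μ.re ≠ 0)
    (hU : U ∈ Matrix.unitaryGroup (Fin n) ℂ)
    (hη : η = 1 ∨ η = -1)
    (hsym : A = η • (U * A.map (starRingEnd ℂ) * Uᴴ))
    (hF : ∀ μ ∈ spectrum ℂ A, ∀ v : Fin n → ℂ, ((A - μ • 1) ^ n) *ᵥ v = 0 →
      (0 < μ.re → F *ᵥ v = v) ∧ (μ.re < 0 → F *ᵥ v = -v)) :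
    F = η • (U * F.map (starRingEnd ℂ) * Uᴴ) := by
  have hF' : IsSpectralSign A F := isSpectralSign_of_forall_mem_spectrum (by simpa using hF)
  exact hF'.eq hA (hF'.smul_antiunitaryConj (U := ⟨U, hU⟩) hη hsym)

theorem stmt_11 {n : ℕ} (A U F : Matrix (Fin n) (Fin n) ℂ) (η : ℂ)
    (hA : ∀ μ ∈ spectrum ℂ A, μ.re ≠ 0)
    (hU : U ∈ Matrix.unitaryGroup (Fin n) ℂ)
    (hη : η = 1 ∨ η = -1)
    (hsym : A = η • (U * A.map (starRingEnd ℂ) * Uᴴ))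
    (hFA : F * A = A * F) (hFF : F * F = 1)
    (hF : ∀ μ ∈ spectrum ℂ A, ∀ v : Fin n → ℂ, ((A - μ • 1) ^ n) *ᵥ v = 0 →
      (0 < μ.re → F *ᵥ v = v) ∧ (μ.re < 0 → F *ᵥ v = -v)) :
    F = η • (U * F.map (starRingEnd ℂ) * Uᴴ) :=
  stmt_11_general A U F η hA hU hη hsym hF
end

section
/- Let A be an n×n complex matrix such that every eigenvalue μ ∈ spectrum ℂ A satisfies Re μ ≠ 0, let U be a unitary n×n matrix, and suppose A = −(U ⬝ A ⬝ Uᴴ). Let F be a spectral sign of A, i.e. F⬝A = A⬝F, F⬝F = 1, and for every eigenvalue μ ∈ spectrum ℂ A and every v ∈ ℂⁿ with ((A − μ•1)^n) *ᵥ v = 0 one has F *ᵥ v = v if Re μ > 0 and F *ᵥ v = −v if Re μ < 0. Then F = −(U ⬝ F ⬝ Uᴴ). -/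
/-!
The symmetry says that `Uᴴ` anticommutes with `A`, so `Uᴴ` maps the generalized eigenvectors of `A`
for `μ` to those for `-μ`. Since `Re (-μ) = -Re μ`, the spectral sign takes opposite values on the two,
so `F` and `-(U F Uᴴ)` agree on every generalized eigenvector; over `ℂ` these span the whole space.
-/

open Matrix

namespace Matrix

variable {ι K : Type*} [Fintype ι] [DecidableEq ι] [Field K]

lemma neg_pow_mulVec_eq_zero_iff (X : Matrix ι ι K) (k : ℕ) (v : ι → K) :
    ((-X) ^ k) *ᵥ v = 0 ↔ (X ^ k) *ᵥ v = 0 := by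
  rcases neg_one_pow_eq_or (Matrix ι ι K) k with h | h <;>
    simp [neg_pow, h, neg_mulVec]

lemma mem_spectrum_of_pow_sub_smul_mulVec_eq_zero {A : Matrix ι ι K} {μ : K} {k : ℕ}
    {v : ι → K} (hv : v ≠ 0) (h : ((A - μ • 1) ^ k) *ᵥ v = 0) : μ ∈ spectrum K A := by
  rw [spectrum.mem_iff]
  intro hunit
  have hpow : IsUnit ((A - μ • 1) ^ k) := by
    rw [← neg_sub, Algebra.algebraMap_eq_smul_one] at hunit
    simpa only [neg_neg] using hunit.neg.pow k
  exact hv (mulVec_injective_iff_isUnit.mpr hpow (h.trans (mulVec_zero _).symm))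

lemma pow_sub_smul_mulVec_mulVec_eq_zero {A X : Matrix ι ι K} (hXA : X * A = -A * X) {μ : K}
    {k : ℕ} {v : ι → K} (h : ((A - μ • 1) ^ k) *ᵥ v = 0) :
    ((A - (-μ) • 1) ^ k) *ᵥ (X *ᵥ v) = 0 := by
  have hsemi : SemiconjBy X (A - μ • 1) (-(A - (-μ) • 1)) := by
    rw [SemiconjBy, mul_sub, hXA, mul_smul_comm, mul_one, neg_smul, sub_neg_eq_add, neg_add,
      add_mul, neg_mul, neg_mul, smul_mul_assoc, one_mul, sub_eq_add_neg]
  rw [← neg_pow_mulVec_eq_zero_iff, mulVec_mulVec, ← (hsemi.pow_right k).eq, ← mulVec_mulVec, h,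
    mulVec_zero]

lemma eq_of_mulVec_eq_of_pow_sub_smul_mulVec_eq_zero [IsAlgClosed K] {A M N : Matrix ι ι K}
    (h : ∀ (μ : K) v, ((A - μ • 1) ^ Fintype.card ι) *ᵥ v = 0 → M *ᵥ v = N *ᵥ v) : M = N := by
  rw [← toLin'.injective.eq_iff, ← sub_eq_zero, ← LinearMap.ker_eq_top, ← top_le_iff,
    ← Module.End.iSup_maxGenEigenspace_eq_top (toLin' A)]
  refine iSup_le fun μ v hv => ?_
  rw [Module.End.maxGenEigenspace_eq_genEigenspace_finrank, Module.finrank_fintype_fun_eq_card,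
    Module.End.mem_genEigenspace_nat, LinearMap.mem_ker] at hv
  rw [LinearMap.mem_ker, LinearMap.sub_apply, sub_eq_zero, toLin'_apply, toLin'_apply]
  apply h μ v
  rwa [← toLin'_apply, toLin'_pow, map_sub, map_smul, toLin'_one]

end Matrix

theorem stmt_14_general {n : ℕ} (A U F : Matrix (Fin n) (Fin n) ℂ)
    (hA : ∀ μ ∈ spectrum ℂ A, μ.re ≠ 0)
    (hU : U ∈ Matrix.unitaryGroup (Fin n) ℂ)
    (hsym : A = -(U * A * Uᴴ))
    (hF : ∀ μ ∈ spectrum ℂ A, ∀ v : Fin n → ℂ, ((A - μ • 1) ^ n) *ᵥ v = 0 →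
      (0 < μ.re → F *ᵥ v = v) ∧ (μ.re < 0 → F *ᵥ v = -v)) :
    F = -(U * F * Uᴴ) := by
  have hUU : U * Uᴴ = 1 := by simpa [star_eq_conjTranspose] using mem_unitaryGroup_iff.mp hU
  have hUU' : Uᴴ * U = 1 := by simpa [star_eq_conjTranspose] using mem_unitaryGroup_iff'.mp hU
  have hUA : Uᴴ * A = -A * Uᴴ := by
    conv_lhs => rw [hsym]
    simp only [mul_neg, neg_mul, ← mul_assoc, hUU', one_mul]
  refine eq_of_mulVec_eq_of_pow_sub_smul_mulVec_eq_zero (A := A) fun μ v hv => ?_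
  rw [Fintype.card_fin] at hv
  obtain rfl | hv0 := eq_or_ne v 0
  · simp
  have hUv : U *ᵥ (Uᴴ *ᵥ v) = v := by rw [mulVec_mulVec, hUU, one_mulVec]
  have hw := pow_sub_smul_mulVec_mulVec_eq_zero hUA hv
  have hw0 : Uᴴ *ᵥ v ≠ 0 := fun h => hv0 (by rw [← hUv, h, mulVec_zero])
  have hμ := mem_spectrum_of_pow_sub_smul_mulVec_eq_zero hv0 hv
  have hμ' := mem_spectrum_of_pow_sub_smul_mulVec_eq_zero hw0 hw
  rw [neg_mulVec, ← mulVec_mulVec, ← mulVec_mulVec]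
  rcases (hA μ hμ).lt_or_gt with hneg | hpos
  · rw [(hF μ hμ v hv).2 hneg, (hF (-μ) hμ' _ hw).1 (by simpa using hneg), hUv]
  · rw [(hF μ hμ v hv).1 hpos, (hF (-μ) hμ' _ hw).2 (by simpa using hpos), mulVec_neg, hUv,
      neg_neg]

theorem stmt_14 {n : ℕ} (A U F : Matrix (Fin n) (Fin n) ℂ)
    (hA : ∀ μ ∈ spectrum ℂ A, μ.re ≠ 0)
    (hU : U ∈ Matrix.unitaryGroup (Fin n) ℂ)
    (hsym : A = -(U * A * Uᴴ))
    (hFA : F * A = A * F) (hFF : F * F = 1)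
    (hF : ∀ μ ∈ spectrum ℂ A, ∀ v : Fin n → ℂ, ((A - μ • 1) ^ n) *ᵥ v = 0 →
      (0 < μ.re → F *ᵥ v = v) ∧ (μ.re < 0 → F *ᵥ v = -v)) :
    F = -(U * F * Uᴴ) :=
  stmt_14_general A U F hA hU hsym hF
end

section
/- Let Z be an N×N complex matrix, α a real number, and ψ ∈ ℂᴺ a vector with Z *ᵥ ψ = (α : ℂ) • ψ. Set s := √(α² + 1) and define w : Fin N ⊕ Fin N → ℂ by w := Sum.elim ψ (((α + s : ℝ) : ℂ) • ψ). Then fromBlocks(−Z, 1, 1, Z) *ᵥ w = ((s : ℝ) : ℂ) • w. Likewise, with w' := Sum.elim ψ (((α − s : ℝ) : ℂ) • ψ), one has fromBlocks(−Z, 1, 1, Z) *ᵥ w' = ((−s : ℝ) : ℂ) • w'. -/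
open Matrix

theorem fromBlocks_neg_one_one_mulVec_sumElim_smul {R n : Type*} [CommRing R] [Fintype n]
    [DecidableEq n] {Z : Matrix n n R} {a μ : R} {ψ : n → R} (hψ : Z *ᵥ ψ = a • ψ)
    (hμ : μ ^ 2 = a ^ 2 + 1) :
    fromBlocks (-Z) 1 1 Z *ᵥ Sum.elim ψ ((a + μ) • ψ) = μ • Sum.elim ψ ((a + μ) • ψ) := by
  rw [fromBlocks_mulVec, Sum.elim_comp_inl, Sum.elim_comp_inr]
  funext i
  cases i <;>
    simp only [Sum.elim_inl, Sum.elim_inr, Pi.smul_apply, Pi.add_apply, neg_mulVec,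
      mulVec_smul, hψ, one_mulVec, Pi.neg_apply, smul_eq_mul]
  case inl i => ring
  -- the lower block reads (1 + a (a + μ)) ψ = μ (a + μ) ψ, i.e. μ² = a² + 1
  case inr i => linear_combination (-ψ i) * hμ

theorem stmt_17 {N : ℕ} (Z : Matrix (Fin N) (Fin N) ℂ) (α : ℝ) (ψ : Fin N → ℂ)
    (hψ : Z *ᵥ ψ = (α : ℂ) • ψ)
    (s : ℝ) (hs : s = Real.sqrt (α ^ 2 + 1))
    (w w' : Fin N ⊕ Fin N → ℂ)
    (hw : w = Sum.elim ψ (((α + s : ℝ) : ℂ) • ψ))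
    (hw' : w' = Sum.elim ψ (((α - s : ℝ) : ℂ) • ψ)) :
    fromBlocks (-Z) 1 1 Z *ᵥ w = ((s : ℝ) : ℂ) • w ∧
    fromBlocks (-Z) 1 1 Z *ᵥ w' = ((-s : ℝ) : ℂ) • w' := by
  have hs_sq : (s : ℂ) ^ 2 = (α : ℂ) ^ 2 + 1 := by
    rw [hs]
    exact_mod_cast Real.sq_sqrt (by positivity : 0 ≤ α ^ 2 + 1)
  subst hw hw'
  push_cast
  rw [sub_eq_add_neg]
  exact ⟨fromBlocks_neg_one_one_mulVec_sumElim_smul hψ hs_sq,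
    fromBlocks_neg_one_one_mulVec_sumElim_smul hψ (by rw [neg_sq, hs_sq])⟩
end

section
/- Let H and M be 2N×2N complex matrices with H Hermitian and antisymmetric (Hᵀ = −H) and M Hermitian. Set Q := −2i•H + M + Mᵀ and L_BdG := fromBlocks(−2i•H − M − Mᵀ, 2•(M − Mᵀ), 0, −2i•H + M + Mᵀ), and suppose Y is a 2N×2N complex matrix satisfying Qᴴ⬝Y + Y⬝Q + 2•(M − Mᵀ) = 0. Define T := fromBlocks(1, Y, 0, 1) and Tinv := fromBlocks(1, −Y, 0, 1). Then T⬝Tinv = 1, Tinv⬝T = 1, and T ⬝ L_BdG ⬝ Tinv = fromBlocks(−Qᴴ, 0, 0, Q). -/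
/-! Conjugating a block upper-triangular matrix `fromBlocks A B 0 D` by `fromBlocks 1 Y 0 1`
only changes the off-diagonal block, to `B + Y D - A Y`. Since the Hermiticity of `H` and `M`
gives `A = -Qᴴ` and `D = Q`, this block is the left-hand side of the Sylvester equation. -/

open Matrix

section UnitUpperTriangular

variable {n α : Type*} [Fintype n] [DecidableEq n] [Ring α]

theorem fromBlocks_one_mul_fromBlocks_one (Y Z : Matrix n n α) :
    fromBlocks 1 Y 0 1 * fromBlocks 1 Z 0 1 =
      (fromBlocks 1 (Z + Y) 0 1 : Matrix (n ⊕ n) (n ⊕ n) α) := by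
  simp [fromBlocks_multiply]

theorem fromBlocks_one_conj_upperTriangular (Y A B D : Matrix n n α) :
    fromBlocks 1 Y 0 1 * fromBlocks A B 0 D * fromBlocks 1 (-Y) 0 1 =
      (fromBlocks A (B + Y * D - A * Y) 0 D : Matrix (n ⊕ n) (n ⊕ n) α) := by
  simp only [fromBlocks_multiply, Matrix.one_mul, Matrix.mul_one, Matrix.zero_mul,
    Matrix.mul_zero, add_zero, zero_add, Matrix.mul_neg]
  abel_nf

end UnitUpperTriangular

theorem conjTranspose_neg_two_I_smul_add_add_transpose {n : Type*} {H M : Matrix n n ℂ}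
    (hH : H.IsHermitian) (hM : M.IsHermitian) :
    ((-(2 * Complex.I)) • H + M + Mᵀ)ᴴ = (2 * Complex.I) • H + M + Mᵀ := by
  rw [conjTranspose_add, conjTranspose_add, conjTranspose_smul, hH.eq, hM.eq, hM.transpose.eq]
  congr 2
  simp

theorem stmt_19_general {N : ℕ} (H M Y : Matrix (Fin (2 * N)) (Fin (2 * N)) ℂ)
    (hH : H.IsHermitian) (hM : M.IsHermitian)
    (Q : Matrix (Fin (2 * N)) (Fin (2 * N)) ℂ)
    (hQ : Q = (-(2 * Complex.I)) • H + M + Mᵀ)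
    (LBdG : Matrix (Fin (2 * N) ⊕ Fin (2 * N)) (Fin (2 * N) ⊕ Fin (2 * N)) ℂ)
    (hLBdG : LBdG = fromBlocks ((-(2 * Complex.I)) • H - M - Mᵀ) ((2 : ℂ) • (M - Mᵀ))
      0 ((-(2 * Complex.I)) • H + M + Mᵀ))
    (hY : Qᴴ * Y + Y * Q + (2 : ℂ) • (M - Mᵀ) = 0)
    (T Tinv : Matrix (Fin (2 * N) ⊕ Fin (2 * N)) (Fin (2 * N) ⊕ Fin (2 * N)) ℂ)
    (hT : T = fromBlocks 1 Y 0 1) (hTinv : Tinv = fromBlocks 1 (-Y) 0 1) :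
    T * Tinv = 1 ∧ Tinv * T = 1 ∧ T * LBdG * Tinv = fromBlocks (-Qᴴ) 0 0 Q := by
  subst hT hTinv hLBdG
  have hA : (-(2 * Complex.I)) • H - M - Mᵀ = -Qᴴ := by
    rw [hQ, conjTranspose_neg_two_I_smul_add_add_transpose hH hM]
    module
  refine ⟨?_, ?_, ?_⟩
  · rw [fromBlocks_one_mul_fromBlocks_one, neg_add_cancel, fromBlocks_one]
  · rw [fromBlocks_one_mul_fromBlocks_one, add_neg_cancel, fromBlocks_one]
  · rw [fromBlocks_one_conj_upperTriangular, hA, ← hQ, fromBlocks_inj]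
    refine ⟨rfl, ?_, rfl, rfl⟩
    rw [Matrix.neg_mul]
    linear_combination (norm := module) hY

theorem stmt_19 {N : ℕ} (H M Y : Matrix (Fin (2 * N)) (Fin (2 * N)) ℂ)
    (hH : H.IsHermitian) (hHanti : Hᵀ = -H) (hM : M.IsHermitian)
    (Q : Matrix (Fin (2 * N)) (Fin (2 * N)) ℂ)
    (hQ : Q = (-(2 * Complex.I)) • H + M + Mᵀ)
    (LBdG : Matrix (Fin (2 * N) ⊕ Fin (2 * N)) (Fin (2 * N) ⊕ Fin (2 * N)) ℂ)
    (hLBdG : LBdG = fromBlocks ((-(2 * Complex.I)) • H - M - Mᵀ) ((2 : ℂ) • (M - Mᵀ))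
      0 ((-(2 * Complex.I)) • H + M + Mᵀ))
    (hY : Qᴴ * Y + Y * Q + (2 : ℂ) • (M - Mᵀ) = 0)
    (T Tinv : Matrix (Fin (2 * N) ⊕ Fin (2 * N)) (Fin (2 * N) ⊕ Fin (2 * N)) ℂ)
    (hT : T = fromBlocks 1 Y 0 1) (hTinv : Tinv = fromBlocks 1 (-Y) 0 1) :
    T * Tinv = 1 ∧ Tinv * T = 1 ∧ T * LBdG * Tinv = fromBlocks (-Qᴴ) 0 0 Q :=
  stmt_19_general H M Y hH hM Q hQ LBdG hLBdG hY T Tinv hT hTinv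
end
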